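/- (Counting strip decompositions of a broken ribbon) Let λ ⊆ λ⁺ be partitions such that λ⁺/λ is a broken ribbon. Then the number of partitions λ' with λ ⊆ λ' ⊆ λ⁺ such that λ'/λ is a horizontal strip and λ⁺/λ' is a vertical strip equals 2^{rib(λ⁺/λ)}. Moreover, every such λ' satisfies |λ⁺/λ'| ≥ hgt(λ⁺/λ). -/

import Mathlib

open scoped Classical

noncomputable section

/-- The cells of the skew diagram `lam / mu`. -/
def skewCells (mu lam : YoungDiagram) : Finset (ℕ × ℕ) := lam.cells \ mu.cells

/-- The size `|lam / mu|` of the skew diagram. -/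
def skewSize (mu lam : YoungDiagram) : ℕ := (skewCells mu lam).card

/-- `lam/mu` is a horizontal strip: no vertical domino. -/
def IsHorizontalStrip (mu lam : YoungDiagram) : Prop :=
  ∀ i j : ℕ, ¬((i, j) ∈ skewCells mu lam ∧ (i + 1, j) ∈ skewCells mu lam)

/-- `lam/mu` is a vertical strip: no horizontal domino. -/
def IsVerticalStrip (mu lam : YoungDiagram) : Prop :=
  ∀ i j : ℕ, ¬((i, j) ∈ skewCells mu lam ∧ (i, j + 1) ∈ skewCells mu lam)

/-- `lam/mu` is a broken ribbon: no 2×2 block. -/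
def IsBrokenRibbon (mu lam : YoungDiagram) : Prop :=
  ∀ i j : ℕ, ¬((i, j) ∈ skewCells mu lam ∧ (i, j + 1) ∈ skewCells mu lam ∧
      (i + 1, j) ∈ skewCells mu lam ∧ (i + 1, j + 1) ∈ skewCells mu lam)

/-- Edge-adjacency of lattice cells. -/
def CellAdj (c d : ℕ × ℕ) : Prop :=
  (c.1 = d.1 ∧ (c.2 = d.2 + 1 ∨ d.2 = c.2 + 1)) ∨
  (c.2 = d.2 ∧ (c.1 = d.1 + 1 ∨ d.1 = c.1 + 1))

/-- The setoid relating cells in the same edge-connected component of `S`. -/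
def componentSetoid (S : Finset (ℕ × ℕ)) : Setoid {c : ℕ × ℕ // c ∈ S} :=
  Relation.EqvGen.setoid (fun x y => CellAdj x.1 y.1)

/-- Edge-connected components of a finite set of cells. -/
def SkewComponents (S : Finset (ℕ × ℕ)) : Type := Quotient (componentSetoid S)

/-- The number of edge-connected components of `S`. -/
def ribSet (S : Finset (ℕ × ℕ)) : ℕ := Nat.card (SkewComponents S)

/-- Pairs (component of `S`, index of a nonempty row of that component). -/
def componentRowPairs (S : Finset (ℕ × ℕ)) : Type :=
  {p : SkewComponents S × ℕ //
    ∃ c : {c : ℕ × ℕ // c ∈ S}, Quotient.mk (componentSetoid S) c = p.1 ∧ c.1.1 = p.2}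

/-- Pairs (component of `S`, index of a nonempty column of that component). -/
def componentColPairs (S : Finset (ℕ × ℕ)) : Type :=
  {p : SkewComponents S × ℕ //
    ∃ c : {c : ℕ × ℕ // c ∈ S}, Quotient.mk (componentSetoid S) c = p.1 ∧ c.1.2 = p.2}

/-- Sum over components of (number of nonempty rows − 1). -/
def hgtSet (S : Finset (ℕ × ℕ)) : ℕ := Nat.card (componentRowPairs S) - ribSet S

/-- Sum over components of (number of nonempty columns − 1). -/
def wtSet (S : Finset (ℕ × ℕ)) : ℕ := Nat.card (componentColPairs S) - ribSet S

/-- rib(lam/mu): number of ribbon components of the broken ribbon `lam/mu`. -/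
def rib (mu lam : YoungDiagram) : ℕ := ribSet (skewCells mu lam)

/-- hgt(lam/mu). -/
def hgt (mu lam : YoungDiagram) : ℕ := hgtSet (skewCells mu lam)

/-- wt(lam/mu). -/
def wt (mu lam : YoungDiagram) : ℕ := wtSet (skewCells mu lam)

/-- `lam/mu` is a ribbon: nonempty, no 2×2 block, and edge-connected. -/
def IsRibbon (mu lam : YoungDiagram) : Prop :=
  0 < skewSize mu lam ∧ IsBrokenRibbon mu lam ∧ rib mu lam = 1

/-- A semistandard Young tableau of skew shape `lam/mu`: a filling of the skew cells
with positive integers, weakly increasing along rows, strictly increasing down columns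
(and `0`, i.e. no entry, outside the skew cells). -/
structure SkewSSYT (mu lam : YoungDiagram) where
  entry : ℕ × ℕ → ℕ
  zeros : ∀ c, c ∉ skewCells mu lam → entry c = 0
  pos : ∀ c ∈ skewCells mu lam, 1 ≤ entry c
  rowWeak : ∀ i j, (i, j) ∈ skewCells mu lam → (i, j + 1) ∈ skewCells mu lam →
    entry (i, j) ≤ entry (i, j + 1)
  colStrict : ∀ i j, (i, j) ∈ skewCells mu lam → (i + 1, j) ∈ skewCells mu lam →
    entry (i, j) < entry (i + 1, j)

/-- The number of cells of the tableau `T` with entry `v`. -/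
def countEntry {mu lam : YoungDiagram} (T : SkewSSYT mu lam) (v : ℕ) : ℕ :=
  ((skewCells mu lam).filter (fun c => T.entry c = v)).card

/-- The skew Schur function `s_{lam/mu}`, as a formal power series in variables
`x_1, x_2, …` (variable index `n : ℕ` standing for `x_{n+1}`): the coefficient of
`x_1^(d 0) x_2^(d 1) ⋯` is the number of SSYT of shape `lam/mu` in which entry `i`
occurs exactly `d (i-1)` times. -/
def skewSchur (R : Type*) [CommRing R] (mu lam : YoungDiagram) : MvPowerSeries ℕ R :=
  fun d => (Nat.card {T : SkewSSYT mu lam // ∀ n : ℕ, countEntry T (n + 1) = d n} : R)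

/-- The power sum symmetric function `p_r = x_1^r + x_2^r + ⋯`. -/
def powerSum (R : Type*) [CommRing R] (r : ℕ) : MvPowerSeries ℕ R :=
  fun d => if ∃ n : ℕ, d = Finsupp.single n r then 1 else 0

/-- The quantum power sum `℘_r = ∑_{τ ⊢ r} (-1)^{ℓ(τ)-1} (q-1)^{ℓ(τ)-1} m_τ`,
written coefficientwise: the coefficient at a monomial with exponent vector `d`
of total degree `r` is `(-1)^{ℓ-1} (q-1)^{ℓ-1}` where `ℓ` is the number of
variables occurring in the monomial. -/
def qps (r : ℕ) : MvPowerSeries ℕ (Polynomial ℤ) :=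
  fun d => if (d.sum fun _ v => v) = r then
      (-1 : Polynomial ℤ) ^ (d.support.card - 1) * (Polynomial.X - 1) ^ (d.support.card - 1)
    else 0

/-- The second quantum power sum `p̄_r = ∑_{τ ⊢ r} q^{r-ℓ(τ)} (q-1)^{ℓ(τ)-1} m_τ`. -/
def qps2 (r : ℕ) : MvPowerSeries ℕ (Polynomial ℤ) :=
  fun d => if (d.sum fun _ v => v) = r then
      (Polynomial.X : Polynomial ℤ) ^ (r - d.support.card) *
        (Polynomial.X - 1) ^ (d.support.card - 1)
    else 0

/-- The one-row Young diagram `(r)`. -/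
def rowDiagram (r : ℕ) : YoungDiagram := YoungDiagram.ofRowLens [r] (List.pairwise_singleton _ r).sortedGE

/-- The one-column Young diagram `(1^r)`. -/
def colDiagram (r : ℕ) : YoungDiagram := (rowDiagram r).transpose

theorem sorted_replicate_one (m : ℕ) : List.Pairwise (· ≥ ·) (List.replicate m (1 : ℕ)) := by
  induction m with
  | zero => simp
  | succ n ih =>
    rw [List.replicate_succ, List.pairwise_cons]
    exact ⟨fun b hb => le_of_eq (List.eq_of_mem_replicate hb), ih⟩

/-- The hook Young diagram `(a+1, 1^m)`. -/
def hookDiagram' (a m : ℕ) : YoungDiagram :=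
  YoungDiagram.ofRowLens ((a + 1) :: List.replicate m 1) (by
    rw [List.sortedGE_iff_pairwise, List.pairwise_cons]
    exact ⟨fun b hb => le_trans (le_of_eq (List.eq_of_mem_replicate hb)) (Nat.le_add_left 1 a),
      sorted_replicate_one m⟩)

/-!
Rows `i` and `i + 1` of `ν/μ` lie in the same ribbon exactly when
`μ.rowLen i < ν.rowLen (i + 1)`, so the components of `ν/μ` correspond to their top rows and
`hgt` counts the nonempty rows that are not top rows. In terms of row lengths, `l` is a strip
decomposition iff `μᵢ ≤ lᵢ ≤ νᵢ ≤ lᵢ + 1` and `lᵢ₊₁ ≤ μᵢ`. On a nonempty row that is not a top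
row, `lᵢ ≤ μᵢ₋₁ < νᵢ` forces `lᵢ = νᵢ - 1`, which gives `hgt ≤ |ν/l|`. On a top row both
`νᵢ` and `νᵢ - 1` are possible, and since the broken-ribbon condition reads `νᵢ₊₁ ≤ μᵢ + 1`,
the choices on different top rows are independent: there are `2 ^ rib` decompositions.
-/

namespace YoungDiagram

theorem le_iff_forall_rowLen_le {μ ν : YoungDiagram} :
    μ ≤ ν ↔ ∀ i, μ.rowLen i ≤ ν.rowLen i := by
  constructor
  · intro h i
    by_contra! hlt
    exact (ν.rowLen i).lt_irrefl (mem_iff_lt_rowLen.1 (h (mem_iff_lt_rowLen.2 hlt)))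
  · rintro h ⟨i, j⟩ hc
    exact mem_iff_lt_rowLen.2 ((mem_iff_lt_rowLen.1 hc).trans_le (h i))

theorem ext_rowLen {μ ν : YoungDiagram} (h : ∀ i, μ.rowLen i = ν.rowLen i) : μ = ν :=
  le_antisymm (le_iff_forall_rowLen_le.2 fun i => (h i).le)
    (le_iff_forall_rowLen_le.2 fun i => (h i).ge)

def truncate (ν : YoungDiagram) (r : ℕ → ℕ) (hr : Antitone r) : YoungDiagram where
  cells := ν.cells.filter fun c => c.2 < r c.1
  isLowerSet := by
    rintro ⟨i₁, j₁⟩ ⟨i₂, j₂⟩ hle hmem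
    obtain ⟨hi, hj⟩ := Prod.mk_le_mk.1 hle
    simp only [Finset.coe_filter, mem_cells] at hmem ⊢
    exact ⟨ν.up_left_mem hi hj hmem.1, hj.trans_lt (hmem.2.trans_le (hr hi))⟩

variable {ν : YoungDiagram} {r : ℕ → ℕ} {hr : Antitone r}

theorem mem_truncate {c : ℕ × ℕ} : c ∈ ν.truncate r hr ↔ c ∈ ν ∧ c.2 < r c.1 := by
  rw [← mem_cells]
  simp [truncate]

theorem rowLen_truncate (i : ℕ) : (ν.truncate r hr).rowLen i = min (ν.rowLen i) (r i) :=
  eq_of_forall_lt_iff fun j => by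
    rw [← mem_iff_lt_rowLen, mem_truncate, mem_iff_lt_rowLen, lt_min_iff]

end YoungDiagram

open YoungDiagram

section Strips

variable {μ ν : YoungDiagram}

theorem mem_skewCells {i j : ℕ} :
    (i, j) ∈ skewCells μ ν ↔ μ.rowLen i ≤ j ∧ j < ν.rowLen i := by
  simp [skewCells, mem_iff_lt_rowLen, and_comm]

theorem isHorizontalStrip_iff :
    IsHorizontalStrip μ ν ↔ ∀ i, ν.rowLen (i + 1) ≤ μ.rowLen i := by
  simp only [IsHorizontalStrip, mem_skewCells]
  constructor
  · intro h i
    by_contra! hlt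
    exact h i (μ.rowLen i) ⟨⟨le_rfl, hlt.trans_le (ν.rowLen_anti _ _ i.le_succ)⟩,
      μ.rowLen_anti _ _ i.le_succ, hlt⟩
  · rintro h i j ⟨⟨hμ, -⟩, -, hν⟩
    exact (hν.trans_le (h i)).not_ge hμ

theorem isVerticalStrip_iff :
    IsVerticalStrip μ ν ↔ ∀ i, ν.rowLen i ≤ μ.rowLen i + 1 := by
  simp only [IsVerticalStrip, mem_skewCells]
  constructor
  · intro h i
    by_contra! hlt
    exact h i (μ.rowLen i) ⟨⟨le_rfl, by omega⟩, by omega, by omega⟩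
  · rintro h i j ⟨⟨hμ, -⟩, -, hν⟩
    have := h i
    omega

theorem IsBrokenRibbon.rowLen_succ_le (hbr : IsBrokenRibbon μ ν) (i : ℕ) :
    ν.rowLen (i + 1) ≤ μ.rowLen i + 1 := by
  by_contra! hlt
  have := ν.rowLen_anti i (i + 1) i.le_succ
  have := μ.rowLen_anti i (i + 1) i.le_succ
  refine hbr i (μ.rowLen i) ⟨?_, ?_, ?_, ?_⟩ <;> rw [mem_skewCells] <;> omega

end Strips

section Components

def componentOf {S : Finset (ℕ × ℕ)} (c : {c // c ∈ S}) : SkewComponents S :=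
  Quotient.mk _ c

theorem componentOf_eq_of_adj {S : Finset (ℕ × ℕ)} {c d : {c // c ∈ S}}
    (h : CellAdj c.1 d.1) : componentOf c = componentOf d :=
  Quotient.sound (Relation.EqvGen.rel _ _ h)

variable (μ ν : YoungDiagram)

def nonemptyRows : Finset ℕ := (skewCells μ ν).image Prod.fst

def IsTopRow : ℕ → Prop
  | 0 => μ.rowLen 0 < ν.rowLen 0
  | i + 1 => μ.rowLen (i + 1) < ν.rowLen (i + 1) ∧ ν.rowLen (i + 1) ≤ μ.rowLen i

def topRows : Finset ℕ := (nonemptyRows μ ν).filter (IsTopRow μ ν)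

/-- The top row of the ribbon of `ν/μ` through row `i`, provided row `i` is nonempty. -/
def topRow : ℕ → ℕ
  | 0 => 0
  | i + 1 => if μ.rowLen i < ν.rowLen (i + 1) then topRow i else i + 1

variable {μ ν}

theorem mem_nonemptyRows {i : ℕ} : i ∈ nonemptyRows μ ν ↔ μ.rowLen i < ν.rowLen i := by
  simp only [nonemptyRows, Finset.mem_image, Prod.exists, exists_and_right, exists_eq_right]
  constructor
  · rintro ⟨j, hj⟩
    obtain ⟨h₁, h₂⟩ := mem_skewCells.1 hj
    exact h₁.trans_lt h₂
  · exact fun h => ⟨_, mem_skewCells.2 ⟨le_rfl, h⟩⟩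

theorem IsTopRow.rowLen_lt {i : ℕ} (h : IsTopRow μ ν i) : μ.rowLen i < ν.rowLen i := by
  cases i with
  | zero => exact h
  | succ i => exact h.1

theorem mem_topRows {i : ℕ} : i ∈ topRows μ ν ↔ IsTopRow μ ν i := by
  simp only [topRows, Finset.mem_filter, mem_nonemptyRows, and_iff_right_iff_imp]
  exact IsTopRow.rowLen_lt

theorem isTopRow_topRow {i : ℕ} (hi : μ.rowLen i < ν.rowLen i) :
    IsTopRow μ ν (topRow μ ν i) := by
  induction i with
  | zero => exact hi
  | succ i ih =>
    simp only [topRow]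
    split_ifs with hconn
    · exact ih (hconn.trans_le (ν.rowLen_anti _ _ i.le_succ))
    · exact ⟨hi, not_lt.1 hconn⟩

theorem IsTopRow.topRow_eq {i : ℕ} (h : IsTopRow μ ν i) : topRow μ ν i = i := by
  cases i with
  | zero => rfl
  | succ i => exact if_neg (not_lt.2 h.2)

theorem rowLen_lt_of_mem {c : ℕ × ℕ} (hc : c ∈ skewCells μ ν) : μ.rowLen c.1 < ν.rowLen c.1 :=
  mem_nonemptyRows.1 (Finset.mem_image_of_mem Prod.fst hc)

theorem componentOf_eq_of_mem_row {i j : ℕ} (n : ℕ) (hc : (i, j) ∈ skewCells μ ν)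
    (hd : (i, j + n) ∈ skewCells μ ν) : componentOf ⟨_, hc⟩ = componentOf ⟨_, hd⟩ := by
  induction n with
  | zero => rfl
  | succ n ih =>
    have hmid : (i, j + n) ∈ skewCells μ ν := by
      rw [mem_skewCells] at hc hd ⊢
      omega
    exact (ih hmid).trans (componentOf_eq_of_adj (Or.inl ⟨rfl, Or.inr rfl⟩))

theorem componentOf_eq_of_fst_eq {c d : {c // c ∈ skewCells μ ν}} (h : c.1.1 = d.1.1) :
    componentOf c = componentOf d := by
  obtain ⟨⟨i, j⟩, hc⟩ := c
  obtain ⟨⟨i', j'⟩, hd⟩ := d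
  obtain rfl : i = i' := h
  rcases le_total j j' with hle | hle
  · obtain ⟨n, rfl⟩ := Nat.exists_eq_add_of_le hle
    exact componentOf_eq_of_mem_row n hc hd
  · obtain ⟨n, rfl⟩ := Nat.exists_eq_add_of_le hle
    exact (componentOf_eq_of_mem_row n hd hc).symm

theorem componentOf_eq_of_fst_eq_topRow {c d : {c // c ∈ skewCells μ ν}}
    (h : d.1.1 = topRow μ ν c.1.1) : componentOf c = componentOf d := by
  obtain ⟨⟨i, j⟩, hc⟩ := c
  induction i generalizing j with
  | zero => exact componentOf_eq_of_fst_eq h.symm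
  | succ i ih =>
    have hμ := μ.rowLen_anti i (i + 1) i.le_succ
    by_cases hconn : μ.rowLen i < ν.rowLen (i + 1)
    · have hlow : (i + 1, μ.rowLen i) ∈ skewCells μ ν := mem_skewCells.2 ⟨hμ, hconn⟩
      have hup : (i, μ.rowLen i) ∈ skewCells μ ν :=
        mem_skewCells.2 ⟨le_rfl, hconn.trans_le (ν.rowLen_anti _ _ i.le_succ)⟩
      calc componentOf ⟨(i + 1, j), hc⟩ = componentOf ⟨_, hlow⟩ := componentOf_eq_of_fst_eq rfl
        _ = componentOf ⟨_, hup⟩ := componentOf_eq_of_adj (Or.inr ⟨rfl, Or.inl rfl⟩)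
        _ = componentOf d := ih _ hup (by simpa [topRow, hconn] using h)
    · exact componentOf_eq_of_fst_eq (by simpa [topRow, hconn] using h.symm)

theorem componentOf_eq_of_topRow_eq {c d : {c // c ∈ skewCells μ ν}}
    (h : topRow μ ν c.1.1 = topRow μ ν d.1.1) : componentOf c = componentOf d := by
  have hne := (isTopRow_topRow (rowLen_lt_of_mem c.2)).rowLen_lt
  let e : {c // c ∈ skewCells μ ν} := ⟨_, mem_skewCells.2 ⟨le_rfl, hne⟩⟩
  exact (componentOf_eq_of_fst_eq_topRow (d := e) rfl).trans
    (componentOf_eq_of_fst_eq_topRow (c := d) (d := e) h).symm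

theorem topRow_succ_eq {i j : ℕ} (hup : (i, j) ∈ skewCells μ ν)
    (hlow : (i + 1, j) ∈ skewCells μ ν) : topRow μ ν (i + 1) = topRow μ ν i :=
  if_pos ((mem_skewCells.1 hup).1.trans_lt (mem_skewCells.1 hlow).2)

theorem topRow_eq_of_adj {c d : {c // c ∈ skewCells μ ν}} (h : CellAdj c.1 d.1) :
    topRow μ ν c.1.1 = topRow μ ν d.1.1 := by
  obtain ⟨⟨i, j⟩, hc⟩ := c
  obtain ⟨⟨i', j'⟩, hd⟩ := d
  simp only [CellAdj] at h
  rcases h with ⟨rfl, -⟩ | ⟨rfl, rfl | rfl⟩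
  · rfl
  · exact topRow_succ_eq hd hc
  · exact (topRow_succ_eq hc hd).symm

def componentTopRow : SkewComponents (skewCells μ ν) → ℕ :=
  Quotient.lift (fun c => topRow μ ν c.1.1) fun _ _ h =>
    Setoid.eqvGen_le (s := Setoid.ker fun c : {c // c ∈ skewCells μ ν} => topRow μ ν c.1.1)
      (fun _ _ => topRow_eq_of_adj) h

theorem rib_eq_card_topRows : rib μ ν = (topRows μ ν).card := by
  have hinj : Function.Injective (componentTopRow (μ := μ) (ν := ν)) := by
    rintro ⟨c⟩ ⟨d⟩ h
    exact componentOf_eq_of_topRow_eq h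
  have hrange : Set.range (componentTopRow (μ := μ) (ν := ν)) = topRows μ ν := by
    ext i
    simp only [Set.mem_range, Finset.mem_coe, mem_topRows]
    constructor
    · rintro ⟨⟨c⟩, rfl⟩
      exact isTopRow_topRow (rowLen_lt_of_mem c.2)
    · intro hi
      exact ⟨componentOf ⟨(i, μ.rowLen i), mem_skewCells.2 ⟨le_rfl, hi.rowLen_lt⟩⟩, hi.topRow_eq⟩
  rw [rib, ribSet, ← Nat.card_range_of_injective hinj, hrange, Nat.card_coe_set_eq,
    Set.ncard_coe_finset]

theorem card_componentRowPairs :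
    Nat.card (componentRowPairs (skewCells μ ν)) = (nonemptyRows μ ν).card := by
  have hinj : Function.Injective fun p : componentRowPairs (skewCells μ ν) => p.1.2 := by
    rintro ⟨⟨q, i⟩, c, hq, hi⟩ ⟨⟨q', i'⟩, d, hq', hi'⟩ (h : i = i')
    dsimp only at hq hi hq' hi'
    subst hq hq' hi hi'
    exact Subtype.ext (Prod.ext (componentOf_eq_of_fst_eq h) h)
  have hrange : Set.range (fun p : componentRowPairs (skewCells μ ν) => p.1.2) =
      nonemptyRows μ ν := by
    ext i
    simp only [Set.mem_range, Finset.mem_coe, nonemptyRows, Finset.mem_image]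
    constructor
    · rintro ⟨⟨_, c, -, hi⟩, rfl⟩
      exact ⟨c.1, c.2, hi⟩
    · rintro ⟨c, hc, rfl⟩
      exact ⟨⟨(componentOf ⟨c, hc⟩, c.1), ⟨c, hc⟩, rfl, rfl⟩, rfl⟩
  rw [← Nat.card_range_of_injective hinj, hrange, Nat.card_coe_set_eq, Set.ncard_coe_finset]

theorem hgt_eq_card_filter_not_isTopRow :
    hgt μ ν = ((nonemptyRows μ ν).filter fun i => ¬ IsTopRow μ ν i).card := by
  rw [hgt, hgtSet, card_componentRowPairs, ← rib, rib_eq_card_topRows, topRows,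
    ← Finset.card_filter_add_card_filter_not (s := nonemptyRows μ ν) (IsTopRow μ ν),
    Nat.add_sub_cancel_left]

end Components

section StripDecompositions

def IsStripDecomposition (μ l ν : YoungDiagram) : Prop :=
  μ ≤ l ∧ l ≤ ν ∧ IsHorizontalStrip μ l ∧ IsVerticalStrip l ν

variable {μ l ν : YoungDiagram}

theorem isStripDecomposition_iff : IsStripDecomposition μ l ν ↔
    ∀ i, μ.rowLen i ≤ l.rowLen i ∧ l.rowLen i ≤ ν.rowLen i ∧
      l.rowLen (i + 1) ≤ μ.rowLen i ∧ ν.rowLen i ≤ l.rowLen i + 1 := by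
  simp only [IsStripDecomposition, le_iff_forall_rowLen_le, isHorizontalStrip_iff,
    isVerticalStrip_iff, ← forall_and]

theorem rowLen_lt_of_not_isTopRow (hl : IsHorizontalStrip μ l) {i : ℕ}
    (hne : μ.rowLen i < ν.rowLen i) (hi : ¬ IsTopRow μ ν i) : l.rowLen i < ν.rowLen i := by
  cases i with
  | zero => exact absurd hne hi
  | succ i =>
    have := isHorizontalStrip_iff.1 hl i
    simp only [IsTopRow, not_and, not_le] at hi
    exact this.trans_lt (hi hne)

theorem hgt_le_skewSize (hl : IsHorizontalStrip μ l) : hgt μ ν ≤ skewSize l ν := by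
  rw [hgt_eq_card_filter_not_isTopRow, skewSize]
  refine Finset.card_le_card_of_injOn (fun i => (i, l.rowLen i)) (fun i hi => ?_)
    (fun _ _ _ _ h => congrArg Prod.fst h)
  simp only [Finset.coe_filter, mem_nonemptyRows, Set.mem_ofPred_eq] at hi
  exact mem_skewCells.2 ⟨le_rfl, rowLen_lt_of_not_isTopRow hl hi.1 hi.2⟩

variable (μ ν) in
def stripRowLen (T : Finset ℕ) (i : ℕ) : ℕ :=
  if i ∈ T then ν.rowLen i else max (μ.rowLen i) (ν.rowLen i - 1)

variable {T : Finset ℕ}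

theorem le_stripRowLen (hT : T ⊆ topRows μ ν) (i : ℕ) : μ.rowLen i ≤ stripRowLen μ ν T i := by
  unfold stripRowLen
  split_ifs with hi
  · exact (mem_topRows.1 (hT hi)).rowLen_lt.le
  · exact le_max_left _ _

theorem stripRowLen_succ_le (hbr : IsBrokenRibbon μ ν) (hT : T ⊆ topRows μ ν) (i : ℕ) :
    stripRowLen μ ν T (i + 1) ≤ μ.rowLen i := by
  have := hbr.rowLen_succ_le i
  have := μ.rowLen_anti i (i + 1) i.le_succ
  unfold stripRowLen
  split_ifs with hi
  · exact (mem_topRows.1 (hT hi)).2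
  · omega

theorem stripRowLen_antitone (hbr : IsBrokenRibbon μ ν) (hT : T ⊆ topRows μ ν) :
    Antitone (stripRowLen μ ν T) :=
  antitone_nat_of_succ_le fun i => (stripRowLen_succ_le hbr hT i).trans (le_stripRowLen hT i)

def stripDecomposition (hbr : IsBrokenRibbon μ ν) (hT : T ⊆ topRows μ ν) : YoungDiagram :=
  ν.truncate (stripRowLen μ ν T) (stripRowLen_antitone hbr hT)

theorem rowLen_stripDecomposition (h : μ ≤ ν) (hbr : IsBrokenRibbon μ ν) (hT : T ⊆ topRows μ ν)
    (i : ℕ) : (stripDecomposition hbr hT).rowLen i = stripRowLen μ ν T i := by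
  have := le_iff_forall_rowLen_le.1 h i
  rw [stripDecomposition, rowLen_truncate, min_eq_right]
  unfold stripRowLen
  split_ifs <;> omega

theorem isStripDecomposition_stripDecomposition (h : μ ≤ ν) (hbr : IsBrokenRibbon μ ν)
    (hT : T ⊆ topRows μ ν) : IsStripDecomposition μ (stripDecomposition hbr hT) ν := by
  refine isStripDecomposition_iff.2 fun i => ?_
  have := le_stripRowLen hT i
  have := stripRowLen_succ_le hbr hT i
  have := le_iff_forall_rowLen_le.1 h i
  simp only [rowLen_stripDecomposition h hbr hT] at *
  unfold stripRowLen at *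
  split_ifs at * <;> omega

variable (μ ν) in
def fullTopRows (l : YoungDiagram) : Finset ℕ :=
  (topRows μ ν).filter fun i => l.rowLen i = ν.rowLen i

theorem fullTopRows_stripDecomposition (h : μ ≤ ν) (hbr : IsBrokenRibbon μ ν)
    (hT : T ⊆ topRows μ ν) : fullTopRows μ ν (stripDecomposition hbr hT) = T := by
  ext i
  simp only [fullTopRows, Finset.mem_filter, rowLen_stripDecomposition h hbr hT, stripRowLen]
  constructor
  · rintro ⟨hi, heq⟩
    by_contra hiT
    have := (mem_topRows.1 hi).rowLen_lt
    rw [if_neg hiT] at heq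
    omega
  · intro hiT
    exact ⟨hT hiT, if_pos hiT⟩

theorem eq_stripDecomposition (h : μ ≤ ν) (hbr : IsBrokenRibbon μ ν) (hT : T ⊆ topRows μ ν)
    (hl : IsStripDecomposition μ l ν) (hlT : fullTopRows μ ν l = T) :
    l = stripDecomposition hbr hT := by
  subst hlT
  refine ext_rowLen fun i => ?_
  obtain ⟨hμl, hlν, -, hνl⟩ := isStripDecomposition_iff.1 hl i
  rw [rowLen_stripDecomposition h hbr, stripRowLen]
  split_ifs with hi
  · exact (Finset.mem_filter.1 hi).2
  · suffices l.rowLen i < ν.rowLen i ∨ μ.rowLen i = ν.rowLen i by omega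
    by_cases hne : μ.rowLen i < ν.rowLen i
    · by_cases htop : IsTopRow μ ν i
      · exact Or.inl (lt_of_le_of_ne hlν fun heq =>
          hi (Finset.mem_filter.2 ⟨mem_topRows.2 htop, heq⟩))
      · exact Or.inl (rowLen_lt_of_not_isTopRow hl.2.2.1 hne htop)
    · exact Or.inr (by omega)

theorem card_stripDecompositions (h : μ ≤ ν) (hbr : IsBrokenRibbon μ ν) :
    Nat.card {l // IsStripDecomposition μ l ν} = 2 ^ (topRows μ ν).card := by
  let F : {l // IsStripDecomposition μ l ν} → (topRows μ ν).powerset := fun l =>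
    ⟨fullTopRows μ ν l, Finset.mem_powerset.2 (Finset.filter_subset _ _)⟩
  have hF : Function.Bijective F := by
    constructor
    · rintro ⟨l₁, hl₁⟩ ⟨l₂, hl₂⟩ h₁₂
      have hsub : fullTopRows μ ν l₂ ⊆ topRows μ ν := Finset.filter_subset _ _
      exact Subtype.ext ((eq_stripDecomposition h hbr hsub hl₁ (congrArg Subtype.val h₁₂)).trans
        (eq_stripDecomposition h hbr hsub hl₂ rfl).symm)
    · rintro ⟨T, hT⟩
      have hT := Finset.mem_powerset.1 hT
      exact ⟨⟨_, isStripDecomposition_stripDecomposition h hbr hT⟩,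
        Subtype.ext (fullTopRows_stripDecomposition h hbr hT)⟩
  rw [Nat.card_eq_of_bijective F hF, Nat.card_eq_finsetCard, Finset.card_powerset]

end StripDecompositions

/-- **Counting strip decompositions of a broken ribbon.** -/
theorem count_strip_decompositions
    (lam lp : YoungDiagram) (h : lam ≤ lp) (hbr : IsBrokenRibbon lam lp) :
    Nat.card {l' : YoungDiagram //
        lam ≤ l' ∧ l' ≤ lp ∧ IsHorizontalStrip lam l' ∧ IsVerticalStrip l' lp} =
      2 ^ rib lam lp ∧
    ∀ l' : YoungDiagram, lam ≤ l' → l' ≤ lp → IsHorizontalStrip lam l' →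
      IsVerticalStrip l' lp → hgt lam lp ≤ skewSize l' lp :=
  ⟨rib_eq_card_topRows ▸ card_stripDecompositions h hbr, fun _ _ _ hhs _ => hgt_le_skewSize hhs⟩
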